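/- For every n ≥ 4 and every nonzero real vector X indexed by [n] × [n], X is an eigenvector of the n-Queens' graph Q(n) with eigenvalue -4 if and only if: (a) every row sum and every column sum of X is zero; (b) the sum of X over each diagonal {(i,j) : i+j = c} with at least two squares is zero; (c) the sum of X over each antidiagonal {(i,j) : i−j = c} with at least two squares is zero; and (d) X vanishes at the four corner squares (1,1), (1,n), (n,1), (n,n). -/

import Mathlib

open Finset

abbrev queensRel (n : ℕ) (a b : Fin n × Fin n) : Prop :=
  a.1 = b.1 ∨ a.2 = b.2 ∨ (a.1 : ℤ) - (a.2 : ℤ) = (b.1 : ℤ) - (b.2 : ℤ) ∨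
    (a.1 : ℤ) + (a.2 : ℤ) = (b.1 : ℤ) + (b.2 : ℤ)

def queensGraph (n : ℕ) : SimpleGraph (Fin n × Fin n) := SimpleGraph.fromRel (queensRel n)

instance (n : ℕ) : DecidableRel (queensGraph n).Adj := fun a b =>
  decidable_of_iff (a ≠ b ∧ (queensRel n a b ∨ queensRel n b a)) Iff.rfl

def IsAdjEigenvalue {V : Type*} [Fintype V] [DecidableEq V] (G : SimpleGraph V)
    [DecidableRel G.Adj] (μ : ℝ) : Prop :=
  ∃ X : V → ℝ, X ≠ 0 ∧ (G.adjMatrix ℝ).mulVec X = μ • X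

/-- The 4×4 pattern X₄ (0-indexed). -/
def X4 : Fin 4 × Fin 4 → ℝ := fun p =>
  if (p.1 = 0 ∧ p.2 = 1) ∨ (p.1 = 1 ∧ p.2 = 3) ∨ (p.1 = 2 ∧ p.2 = 0) ∨ (p.1 = 3 ∧ p.2 = 2)
  then 1
  else if (p.1 = 0 ∧ p.2 = 2) ∨ (p.1 = 1 ∧ p.2 = 0) ∨ (p.1 = 2 ∧ p.2 = 3) ∨ (p.1 = 3 ∧ p.2 = 1)
  then -1 else 0

def Xab (n a b : ℕ) : Fin n × Fin n → ℝ := fun p =>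
  if h : a ≤ (p.1 : ℕ) ∧ (p.1 : ℕ) ≤ a + 3 ∧ b ≤ (p.2 : ℕ) ∧ (p.2 : ℕ) ≤ b + 3 then
    X4 (⟨(p.1 : ℕ) - a, by omega⟩, ⟨(p.2 : ℕ) - b, by omega⟩)
  else 0

/-!
Every square lies on exactly one row, column, diagonal and antidiagonal, and two distinct
squares share at most one of these lines. Hence `A + 4 I = ∑ Pₗ`, where `Pₗ X` sums `X` over the
line of type `l` through each square, and `⟪X, Pₗ X⟫` is the sum of the squares of the `l`-line
sums. So `(A + 4 I) X = 0` forces every line sum to vanish, and conversely. The only lines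
consisting of a single square are the diagonals and antidiagonals through the four corners, which
accounts for the corner conditions.
-/

section FiberSum

variable {V L : Type*} [Fintype V] [DecidableEq L]

def fiberSum (f : V → L) (X : V → ℝ) (l : L) : ℝ :=
  ∑ v ∈ univ.filter (fun v => f v = l), X v

theorem fiberSum_eq_sum_ite (f : V → L) (X : V → ℝ) (l : L) :
    fiberSum f X l = ∑ v, if f v = l then X v else 0 :=
  sum_filter _ _

theorem sum_mul_fiberSum (f : V → L) (X : V → ℝ) :
    ∑ v, X v * fiberSum f X (f v) = ∑ l ∈ univ.image f, fiberSum f X l ^ 2 := by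
  rw [← sum_fiberwise_of_maps_to (g := f) (t := univ.image f) (by simp)]
  refine sum_congr rfl fun l _ => ?_
  rw [sq]
  unfold fiberSum
  rw [sum_mul]
  exact sum_congr rfl fun v hv => by rw [(mem_filter.1 hv).2]

theorem sum_mul_fiberSum_nonneg (f : V → L) (X : V → ℝ) :
    0 ≤ ∑ v, X v * fiberSum f X (f v) := by
  rw [sum_mul_fiberSum]
  exact sum_nonneg fun _ _ => sq_nonneg _

theorem sum_mul_fiberSum_eq_zero_iff (f : V → L) (X : V → ℝ) :
    ∑ v, X v * fiberSum f X (f v) = 0 ↔ ∀ v, fiberSum f X (f v) = 0 := by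
  rw [sum_mul_fiberSum, sum_eq_zero_iff_of_nonneg fun _ _ => sq_nonneg _]
  simp

theorem forall_fiberSum_apply_eq_zero_iff (f : V → L) (X : V → ℝ) :
    (∀ v, fiberSum f X (f v) = 0) ↔ ∀ l, fiberSum f X l = 0 := by
  refine ⟨fun h l => ?_, fun h v => h _⟩
  by_cases hl : ∃ v, f v = l
  · obtain ⟨v, rfl⟩ := hl
    exact h v
  · push Not at hl
    exact sum_eq_zero fun v hv => absurd (mem_filter.1 hv).2 (hl v)

theorem fiberSum_apply_eq_of_forall {f : V → L} {v : V} (hv : ∀ w, f w = f v → w = v)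
    (X : V → ℝ) : fiberSum f X (f v) = X v := by
  rw [fiberSum, sum_eq_single_of_mem v (by simp)]
  exact fun w hw hne => absurd (hv w (mem_filter.1 hw).2) hne

theorem fiberSum_comp {L' : Type*} [DecidableEq L'] {g : L → L'} (hg : Function.Injective g)
    (f : V → L) (X : V → ℝ) (l : L) : fiberSum (fun v => g (f v)) X (g l) = fiberSum f X l := by
  simp only [fiberSum, hg.eq_iff]

theorem fiberSum_fst {α β : Type*} [Fintype α] [Fintype β] [DecidableEq α]
    (X : α × β → ℝ) (a : α) : fiberSum Prod.fst X a = ∑ b, X (a, b) := by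
  rw [fiberSum_eq_sum_ite, Fintype.sum_prod_type, sum_eq_single a] <;> simp +contextual

theorem fiberSum_snd {α β : Type*} [Fintype α] [Fintype β] [DecidableEq β]
    (X : α × β → ℝ) (b : β) : fiberSum Prod.snd X b = ∑ a, X (a, b) := by
  rw [fiberSum_eq_sum_ite, Fintype.sum_prod_type_right, sum_eq_single b] <;> simp +contextual

theorem fiberSum_eq_zero_of_forall_sum_eq_zero {ι : Type*} [Fintype ι] {f : ι → V → L}
    {X : V → ℝ} (h : ∀ v, ∑ i, fiberSum (f i) X (f i v) = 0) (i : ι) (v : V) :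
    fiberSum (f i) X (f i v) = 0 := by
  have htotal : ∑ i, ∑ v, X v * fiberSum (f i) X (f i v) = 0 := by
    rw [sum_comm]
    simp [← mul_sum, h]
  rw [sum_eq_zero_iff_of_nonneg fun i _ => sum_mul_fiberSum_nonneg (f i) X] at htotal
  exact (sum_mul_fiberSum_eq_zero_iff (f i) X).1 (htotal i (mem_univ i)) v

end FiberSum

section Lines

variable {V L ι : Type*} [Fintype V] [DecidableEq V] [DecidableEq L] [Fintype ι]
  {G : SimpleGraph V} [DecidableRel G.Adj] {f : ι → V → L}

theorem adjMatrix_mulVec_apply_of_lines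
    (hadj : ∀ v w, G.Adj v w ↔ v ≠ w ∧ ∃ i, f i v = f i w)
    (hlines : ∀ v w, v ≠ w → ∀ i j, f i v = f i w → f j v = f j w → i = j)
    (X : V → ℝ) (v : V) :
    (G.adjMatrix ℝ).mulVec X v = ∑ i, fiberSum (f i) X (f i v) - Fintype.card ι * X v := by
  rw [SimpleGraph.adjMatrix_mulVec_apply, SimpleGraph.neighborFinset_eq_filter, sum_filter]
  simp_rw [fiberSum_eq_sum_ite]
  rw [sum_comm, ← Fintype.sum_ite_eq' v X, mul_sum, ← sum_sub_distrib]
  refine sum_congr rfl fun w _ => ?_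
  rw [← sum_filter, sum_const, nsmul_eq_mul]
  rcases eq_or_ne w v with rfl | hwv
  · simp
  have hcard : #(univ.filter fun i => f i w = f i v) = if G.Adj v w then 1 else 0 := by
    split_ifs with hA
    · obtain ⟨i, hi⟩ := ((hadj v w).1 hA).2
      refine le_antisymm (card_le_one.2 fun a ha b hb => ?_) (card_pos.2 ⟨i, by simp [hi]⟩)
      simp only [mem_filter, mem_univ, true_and] at ha hb
      exact hlines v w hwv.symm a b ha.symm hb.symm
    · refine card_eq_zero.2 (filter_eq_empty_iff.2 fun i _ hi => hA ?_)
      exact (hadj v w).2 ⟨hwv.symm, i, hi.symm⟩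
  rw [hcard, if_neg hwv]
  split_ifs <;> simp

theorem adjMatrix_mulVec_eq_neg_card_smul_iff
    (hadj : ∀ v w, G.Adj v w ↔ v ≠ w ∧ ∃ i, f i v = f i w)
    (hlines : ∀ v w, v ≠ w → ∀ i j, f i v = f i w → f j v = f j w → i = j)
    (X : V → ℝ) :
    (G.adjMatrix ℝ).mulVec X = -(Fintype.card ι : ℝ) • X ↔
      ∀ i v, fiberSum (f i) X (f i v) = 0 := by
  have hsum : (G.adjMatrix ℝ).mulVec X = -(Fintype.card ι : ℝ) • X ↔
      ∀ v, ∑ i, fiberSum (f i) X (f i v) = 0 := by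
    simp only [funext_iff, Pi.smul_apply, smul_eq_mul,
      adjMatrix_mulVec_apply_of_lines hadj hlines]
    exact forall_congr' fun v => by constructor <;> intro h <;> linarith
  rw [hsum]
  exact ⟨fiberSum_eq_zero_of_forall_sum_eq_zero, fun h v => sum_eq_zero fun i _ => h i v⟩

end Lines

section Queens

variable {n : ℕ}

def queensLine (n : ℕ) : Fin 4 → Fin n × Fin n → ℤ :=
  ![fun p => p.1, fun p => p.2, fun p => p.1 - p.2, fun p => ((p.1 + p.2 : ℕ) : ℤ)]

theorem queensGraph_adj_iff (p q : Fin n × Fin n) :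
    (queensGraph n).Adj p q ↔ p ≠ q ∧ ∃ i, queensLine n i p = queensLine n i q := by
  rw [queensGraph, SimpleGraph.fromRel_adj]
  refine and_congr_right fun _ => ?_
  simp [queensRel, Fin.exists_fin_succ, queensLine, Fin.ext_iff]
  omega

theorem queensLine_eq_of_ne {p q : Fin n × Fin n} (hpq : p ≠ q) (i j : Fin 4)
    (hi : queensLine n i p = queensLine n i q) (hj : queensLine n j p = queensLine n j q) :
    i = j := by
  rw [Ne, Prod.ext_iff, Fin.ext_iff, Fin.ext_iff] at hpq
  fin_cases i <;> fin_cases j <;> simp [queensLine] at hi hj ⊢ <;> omega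

theorem queensGraph_mulVec_eq_neg_four_smul_iff (X : Fin n × Fin n → ℝ) :
    ((queensGraph n).adjMatrix ℝ).mulVec X = (-4 : ℝ) • X ↔
      ∀ i p, fiberSum (queensLine n i) X (queensLine n i p) = 0 := by
  have := adjMatrix_mulVec_eq_neg_card_smul_iff queensGraph_adj_iff
    (fun _ _ hpq => queensLine_eq_of_ne hpq) X
  rwa [Fintype.card_fin, Nat.cast_ofNat] at this

theorem forall_fiberSum_queensLine_zero_iff (X : Fin n × Fin n → ℝ) :
    (∀ p, fiberSum (queensLine n 0) X (queensLine n 0 p) = 0) ↔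
      ∀ k : Fin n, ∑ j : Fin n, X (k, j) = 0 := by
  have hrow (p : Fin n × Fin n) :
      fiberSum (queensLine n 0) X (queensLine n 0 p) = ∑ j, X (p.1, j) :=
    (fiberSum_comp (Nat.cast_injective.comp Fin.val_injective) Prod.fst X p.1).trans
      (fiberSum_fst X p.1)
  simp only [hrow]
  exact ⟨fun h k => h (k, k), fun h p => h p.1⟩

theorem forall_fiberSum_queensLine_one_iff (X : Fin n × Fin n → ℝ) :
    (∀ p, fiberSum (queensLine n 1) X (queensLine n 1 p) = 0) ↔
      ∀ k : Fin n, ∑ i : Fin n, X (i, k) = 0 := by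
  have hcol (p : Fin n × Fin n) :
      fiberSum (queensLine n 1) X (queensLine n 1 p) = ∑ i, X (i, p.2) :=
    (fiberSum_comp (Nat.cast_injective.comp Fin.val_injective) Prod.snd X p.2).trans
      (fiberSum_snd X p.2)
  simp only [hcol]
  exact ⟨fun h k => h (k, k), fun h p => h p.2⟩

theorem forall_fiberSum_queensLine_two_iff (hn : 2 ≤ n) (X : Fin n × Fin n → ℝ) :
    (∀ p, fiberSum (queensLine n 2) X (queensLine n 2 p) = 0) ↔
      (∀ c : ℤ, c.natAbs ≤ n - 2 →
        ∑ p ∈ Finset.univ.filter (fun p : Fin n × Fin n => (p.1 : ℤ) - (p.2 : ℤ) = c),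
          X p = 0) ∧
      X (⟨0, by omega⟩, ⟨n - 1, by omega⟩) = 0 ∧ X (⟨n - 1, by omega⟩, ⟨0, by omega⟩) = 0 := by
  let diag (p : Fin n × Fin n) : ℤ := p.1 - p.2
  show (∀ p, fiberSum diag X (diag p) = 0) ↔ _
  have hcorner (p : Fin n × Fin n) (hp : n - 2 < (diag p).natAbs) :
      fiberSum diag X (diag p) = X p := by
    refine fiberSum_apply_eq_of_forall (fun q hq => ?_) X
    simp only [diag] at hp hq
    ext <;> omega
  constructor
  · intro h
    refine ⟨fun c _ => (forall_fiberSum_apply_eq_zero_iff diag X).1 h c, ?_, ?_⟩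
    · rw [← hcorner (⟨0, by omega⟩, ⟨n - 1, by omega⟩) (by simp [diag]; omega)]
      exact h _
    · rw [← hcorner (⟨n - 1, by omega⟩, ⟨0, by omega⟩) (by simp [diag]; omega)]
      exact h _
  · rintro ⟨hdiag, h0n, hn0⟩ p
    by_cases hp : (diag p).natAbs ≤ n - 2
    · exact hdiag _ hp
    rw [hcorner p (by omega)]
    obtain hp | hp : p = (⟨0, by omega⟩, ⟨n - 1, by omega⟩) ∨
        p = (⟨n - 1, by omega⟩, ⟨0, by omega⟩) := by
      simp only [diag] at hp
      simp only [Prod.ext_iff, Fin.ext_iff]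
      omega
    · rw [hp]; exact h0n
    · rw [hp]; exact hn0

theorem forall_fiberSum_queensLine_three_iff (hn : 2 ≤ n) (X : Fin n × Fin n → ℝ) :
    (∀ p, fiberSum (queensLine n 3) X (queensLine n 3 p) = 0) ↔
      (∀ c : ℕ, 1 ≤ c → c ≤ 2 * n - 3 →
        ∑ p ∈ Finset.univ.filter (fun p : Fin n × Fin n => (p.1 : ℕ) + (p.2 : ℕ) = c),
          X p = 0) ∧
      X (⟨0, by omega⟩, ⟨0, by omega⟩) = 0 ∧ X (⟨n - 1, by omega⟩, ⟨n - 1, by omega⟩) = 0 := by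
  let antidiag (p : Fin n × Fin n) : ℕ := p.1 + p.2
  have hnat (p : Fin n × Fin n) : fiberSum (queensLine n 3) X (queensLine n 3 p) =
      fiberSum antidiag X (antidiag p) :=
    fiberSum_comp Nat.cast_injective antidiag X _
  have hcorner (p : Fin n × Fin n) (hp : antidiag p = 0 ∨ 2 * n - 2 ≤ antidiag p) :
      fiberSum antidiag X (antidiag p) = X p := by
    refine fiberSum_apply_eq_of_forall (fun q hq => ?_) X
    simp only [antidiag] at hp hq
    ext <;> omega
  simp only [hnat]
  constructor
  · intro h
    refine ⟨fun c _ _ => (forall_fiberSum_apply_eq_zero_iff antidiag X).1 h c, ?_, ?_⟩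
    · rw [← hcorner (⟨0, by omega⟩, ⟨0, by omega⟩) (by simp [antidiag])]
      exact h _
    · rw [← hcorner (⟨n - 1, by omega⟩, ⟨n - 1, by omega⟩) (by simp [antidiag]; omega)]
      exact h _
  · rintro ⟨hanti, h00, hnn⟩ p
    by_cases hp : 1 ≤ antidiag p ∧ antidiag p ≤ 2 * n - 3
    · exact hanti _ hp.1 hp.2
    rw [hcorner p (by omega)]
    obtain hp | hp : p = (⟨0, by omega⟩, ⟨0, by omega⟩) ∨
        p = (⟨n - 1, by omega⟩, ⟨n - 1, by omega⟩) := by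
      simp only [antidiag] at hp
      simp only [Prod.ext_iff, Fin.ext_iff]
      omega
    · rw [hp]; exact h00
    · rw [hp]; exact hnn

end Queens

/-- characterization of eigenvectors of `Q(n)` for the eigenvalue `-4`. -/
theorem queens_eigenvector_iff (n : ℕ) (h : 4 ≤ n) (X : Fin n × Fin n → ℝ) :
    ((queensGraph n).adjMatrix ℝ).mulVec X = (-4 : ℝ) • X ↔
      ((∀ k : Fin n, ∑ j : Fin n, X (k, j) = 0) ∧
       (∀ k : Fin n, ∑ i : Fin n, X (i, k) = 0) ∧
       (∀ c : ℕ, 1 ≤ c → c ≤ 2 * n - 3 →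
         ∑ p ∈ Finset.univ.filter (fun p : Fin n × Fin n => (p.1 : ℕ) + (p.2 : ℕ) = c),
           X p = 0) ∧
       (∀ c : ℤ, c.natAbs ≤ n - 2 →
         ∑ p ∈ Finset.univ.filter (fun p : Fin n × Fin n => (p.1 : ℤ) - (p.2 : ℤ) = c),
           X p = 0) ∧
       X (⟨0, by omega⟩, ⟨0, by omega⟩) = 0 ∧ X (⟨0, by omega⟩, ⟨n - 1, by omega⟩) = 0 ∧
       X (⟨n - 1, by omega⟩, ⟨0, by omega⟩) = 0 ∧
       X (⟨n - 1, by omega⟩, ⟨n - 1, by omega⟩) = 0) := by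
  have hn : 2 ≤ n := by omega
  have hsplit {P : Fin 4 → Prop} : (∀ i, P i) ↔ P 0 ∧ P 1 ∧ P 2 ∧ P 3 :=
    ⟨fun h => ⟨h 0, h 1, h 2, h 3⟩, fun h i => by fin_cases i <;> simp [h]⟩
  rw [queensGraph_mulVec_eq_neg_four_smul_iff, hsplit, forall_fiberSum_queensLine_zero_iff,
    forall_fiberSum_queensLine_one_iff, forall_fiberSum_queensLine_two_iff hn,
    forall_fiberSum_queensLine_three_iff hn]
  tauto
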